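/- Let a group Γ act on a set X, let D ⊆ X satisfy Γ·D = X, and let S ⊆ Γ be a symmetric set of generators of Γ (s ∈ S implies s^{−1} ∈ S) containing the identity element. Let q ≥ 0 and let f: X → ℂ be a function such that ((γ_0−1)(γ_1−1)⋯(γ_q−1)·f) = 0 for all γ_0,…,γ_q ∈ Γ, where Γ acts on functions by (γ·f)(x) = f(γ^{−1}·x) and this action is extended linearly to ℂ[Γ]. If f vanishes on S^q·D = {s_1⋯s_q·d : s_1,…,s_q ∈ S, d ∈ D}, then f = 0 on all of X. -/

import Mathlib

/-!
Induction on `q`, generalizing `f`. For `s ∈ S` the function `(s - 1)·f` satisfies the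
hypotheses for `q` when `f` satisfies them for `q + 1`: it is annihilated by all products of
`q + 1` factors `γ - 1`, and it vanishes on `S^q·D` because `S^q·D` and `s⁻¹·S^q·D` both lie
in `S^(q+1)·D` (as `1 ∈ S` and `S` is symmetric). Hence `(s - 1)·f = 0` for all generators
`s`, so `f` is `Γ`-invariant, and an invariant function vanishing on `D = 1^q·D` vanishes on
`Γ·D = X`.
-/

/-- The action of `(γ - 1) ∈ ℂ[Γ]` on complex-valued functions on `X`,
where `(γ·f)(x) = f(γ⁻¹·x)`. -/
def diffAct {Γ X : Type*} [Group Γ] [MulAction Γ X] (γ : Γ) (f : X → ℂ) : X → ℂ :=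
  fun x => f (γ⁻¹ • x) - f x

section

variable {Γ X : Type*} [Group Γ] [MulAction Γ X]

lemma diffAct_eq_zero_iff {γ : Γ} {f : X → ℂ} :
    diffAct γ f = 0 ↔ ∀ x, f (γ • x) = f x := by
  refine ⟨fun h x => ?_, fun h => funext fun x => ?_⟩
  · simpa [diffAct, sub_eq_zero, eq_comm] using congrFun h (γ • x)
  · simpa [diffAct, sub_eq_zero] using (h (γ⁻¹ • x)).symm

lemma foldr_diffAct_ofFn_snoc {n : ℕ} (g : Fin n → Γ) (s : Γ) (f : X → ℂ) :
    (List.ofFn (Fin.snoc g s)).foldr diffAct f = (List.ofFn g).foldr diffAct (diffAct s f) := by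
  rw [List.ofFn_succ']
  simp

lemma smul_eq_of_diffAct_eq_zero {S : Set Γ} (hS : Subgroup.closure S = ⊤) {f : X → ℂ}
    (h : ∀ s ∈ S, diffAct s f = 0) (γ : Γ) (x : X) : f (γ • x) = f x := by
  have hγ : γ ∈ Subgroup.closure S := hS ▸ Subgroup.mem_top γ
  induction hγ using Subgroup.closure_induction generalizing x with
  | mem s hs => exact diffAct_eq_zero_iff.1 (h s hs) x
  | one => rw [one_smul]
  | mul a b _ _ ha hb => rw [mul_smul, ha, hb]
  | inv a _ ha => rw [← ha, smul_inv_smul]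

lemma eq_zero_of_smul_eq {D : Set X} (hD : ∀ x : X, ∃ γ : Γ, ∃ d ∈ D, x = γ • d)
    {f : X → ℂ} (hf : ∀ (γ : Γ) x, f (γ • x) = f x) (hfD : ∀ d ∈ D, f d = 0) (x : X) :
    f x = 0 := by
  obtain ⟨γ, d, hd, rfl⟩ := hD x
  rw [hf, hfD d hd]

lemma apply_smul_ofFn_prod_smul_eq_zero {S : Set Γ} {D : Set X} {q : ℕ} {f : X → ℂ}
    (hvan : ∀ s : Fin (q + 1) → Γ, (∀ i, s i ∈ S) → ∀ d ∈ D,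
      f ((List.ofFn s).prod • d) = 0)
    {t : Γ} (ht : t ∈ S) {w : Fin q → Γ} (hw : ∀ i, w i ∈ S) {d : X} (hd : d ∈ D) :
    f (t • (List.ofFn w).prod • d) = 0 := by
  simpa [List.ofFn_succ, mul_smul] using hvan (Fin.cons t w) (Fin.cases ht hw) d hd

lemma apply_eq_zero_of_one_mem {S : Set Γ} {D : Set X} {q : ℕ} {f : X → ℂ}
    (hvan : ∀ s : Fin q → Γ, (∀ i, s i ∈ S) → ∀ d ∈ D,
      f ((List.ofFn s).prod • d) = 0)
    (hS : (1 : Γ) ∈ S) : ∀ d ∈ D, f d = 0 := fun d hd => by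
  simpa using hvan (fun _ => 1) (fun _ => hS) d hd

lemma diffAct_ofFn_prod_smul_eq_zero {S : Set Γ} {D : Set X} {q : ℕ} {f : X → ℂ}
    (hvan : ∀ s : Fin (q + 1) → Γ, (∀ i, s i ∈ S) → ∀ d ∈ D,
      f ((List.ofFn s).prod • d) = 0)
    (hSone : (1 : Γ) ∈ S) {s : Γ} (hs : s⁻¹ ∈ S) :
    ∀ w : Fin q → Γ, (∀ i, w i ∈ S) → ∀ d ∈ D,
      diffAct s f ((List.ofFn w).prod • d) = 0 := by
  intro w hw d hd
  rw [diffAct, apply_smul_ofFn_prod_smul_eq_zero hvan hs hw hd,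
    ← one_smul Γ ((List.ofFn w).prod • d), apply_smul_ofFn_prod_smul_eq_zero hvan hSone hw hd,
    sub_zero]

end

theorem stmt5 {Γ X : Type*} [Group Γ] [MulAction Γ X]
    (D : Set X) (hD : ∀ x : X, ∃ γ : Γ, ∃ d ∈ D, x = γ • d)
    (S : Set Γ) (hSsym : ∀ s ∈ S, s⁻¹ ∈ S) (hSone : (1 : Γ) ∈ S)
    (hSgen : Subgroup.closure S = ⊤)
    (q : ℕ) (f : X → ℂ)
    (hf : ∀ g : Fin (q + 1) → Γ, (List.ofFn g).foldr diffAct f = 0)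
    (hvan : ∀ s : Fin q → Γ, (∀ i, s i ∈ S) → ∀ d ∈ D,
      f ((List.ofFn s).prod • d) = 0) :
    ∀ x : X, f x = 0 := by
  induction q generalizing f with
  | zero =>
    refine eq_zero_of_smul_eq hD (fun γ => diffAct_eq_zero_iff.1 ?_)
      (apply_eq_zero_of_one_mem hvan hSone)
    simpa using hf fun _ => γ
  | succ q ih =>
    have hgen : ∀ s ∈ S, diffAct s f = 0 := fun s hs => funext <| ih (diffAct s f)
      (fun g => by rw [← foldr_diffAct_ofFn_snoc]; exact hf _)
      (diffAct_ofFn_prod_smul_eq_zero hvan hSone (hSsym s hs))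
    exact eq_zero_of_smul_eq hD (smul_eq_of_diffAct_eq_zero hSgen hgen)
      (apply_eq_zero_of_one_mem hvan hSone)
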